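/- arXiv:2108.10158 — 4 statements merged into one kernel-verified Lean document; each statement's English description precedes it below -/
import Mathlib

section
/- For all integers N ≥ 2, d with 1 ≤ d ≤ N, and l with 0 ≤ l ≤ N-1, the number AQ_N(l,d) of tuples (l_1,...,l_d) of integers with N-1 ≥ l_1 > l_2 > ... > l_d ≥ 0 and alternating sum l_1 - l_2 + l_3 - ... + (-1)^{d-1} l_d = l equals C(l-1, ⌊(d-1)/2⌋)·C(N-l, ⌊d/2⌋) when d is even, and C(l, ⌊(d-1)/2⌋)·C(N-l-1, ⌊d/2⌋) when d is odd (with the convention that C(a,b)=0 when a < b or a < 0). -/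
/-!
Split the tuples counted by `AQ_N(l, d)` according to whether the largest entry `l_1` equals
`N - 1`. If not, the tuple is counted by `AQ_{N-1}(l, d)`; if so, removing it leaves a tuple
counted by `AQ_{N-1}(N - 1 - l, d - 1)`. The closed form satisfies the same recurrence by
Pascal's rule, which holds for `intChoose` at every integer upper argument, and the same initial
values (`N = 0`, and `d = 1` through `AQ_N(l, 0) = [l = 0]`).
-/

/-- Binomial coefficient with integer upper argument, with the convention
that it vanishes for negative upper argument (and for `b > a`). -/
def intChoose (a : ℤ) (b : ℕ) : ℤ :=
  if a < 0 then 0 else (a.toNat.choose b : ℤ)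

open Matrix

lemma intChoose_of_neg {a : ℤ} (ha : a < 0) (b : ℕ) : intChoose a b = 0 := if_pos ha

lemma intChoose_succ_succ (a : ℤ) (b : ℕ) :
    intChoose (a + 1) (b + 1) = intChoose a b + intChoose a (b + 1) := by
  unfold intChoose
  rcases (by omega : a < -1 ∨ a = -1 ∨ 0 ≤ a) with h | rfl | h
  · simp [show a < 0 by omega, show a + 1 < 0 by omega]
  · simp
  · lift a to ℕ using h
    rw [if_neg (by omega), if_neg (by omega), if_neg (by omega), ← Nat.cast_succ,
      Int.toNat_natCast, Int.toNat_natCast, Nat.choose_succ_succ, Nat.cast_add]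

lemma strictAnti_vecCons_of_lt {α : Type*} [Preorder α] {n : ℕ} {x : α} {w : Fin n → α}
    (hw : StrictAnti w) (hx : ∀ j, w j < x) : StrictAnti (vecCons x w) := by
  cases n with
  | zero => intro i j hij; omega
  | succ n => exact strictAnti_vecCons.mpr ⟨hx 0, hw⟩

def altSum {d : ℕ} (v : Fin d → ℤ) : ℤ := ∑ j : Fin d, (-1) ^ (j : ℕ) * v j

lemma altSum_vecCons {d : ℕ} (x : ℤ) (w : Fin d → ℤ) : altSum (vecCons x w) = x - altSum w := by
  simp [altSum, Fin.sum_univ_succ, pow_succ, Finset.sum_neg_distrib, sub_eq_add_neg]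

/-- `AQ_N(l, d)` is the cardinality of `AltTuples d 0 (N - 1) l`. -/
def AltTuples (d : ℕ) (a b l : ℤ) : Set (Fin d → ℤ) :=
  {v | StrictAnti v ∧ (∀ j, a ≤ v j ∧ v j ≤ b) ∧ altSum v = l}

namespace AltTuples

lemma finite (d : ℕ) (a b l : ℤ) : (AltTuples d a b l).Finite :=
  (Set.finite_Icc (fun _ => a) (fun _ => b)).subset fun _ hv =>
    ⟨fun j => (hv.2.1 j).1, fun j => (hv.2.1 j).2⟩

lemma eq_empty_of_lt {d : ℕ} (hd : 1 ≤ d) {a b : ℤ} (hba : b < a) (l : ℤ) :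
    AltTuples d a b l = ∅ :=
  Set.eq_empty_of_forall_notMem fun _ hv => by have := hv.2.1 ⟨0, hd⟩; omega

lemma ncard_zero (a b l : ℤ) : (AltTuples 0 a b l).ncard = if l = 0 then 1 else 0 := by
  split_ifs with hl
  · rw [show AltTuples 0 a b l = Set.univ from ?_, Set.ncard_univ, Nat.card_unique]
    ext v
    simp [AltTuples, altSum, hl, Subsingleton.strictAnti]
  · rw [Set.ncard_eq_zero]
    ext v
    simp [AltTuples, altSum, Ne.symm hl]

lemma succ_upper_eq_union (d : ℕ) {a b : ℤ} (hab : a ≤ b + 1) (l : ℤ) :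
    AltTuples (d + 1) a (b + 1) l =
      AltTuples (d + 1) a b l ∪ vecCons (b + 1) '' AltTuples d a b (b + 1 - l) := by
  ext v
  constructor
  · rintro ⟨hanti, hbound, hsum⟩
    by_cases hv0 : v 0 ≤ b
    · exact Or.inl ⟨hanti,
        fun j => ⟨(hbound j).1, (hanti.antitone (Fin.zero_le j)).trans hv0⟩, hsum⟩
    · have hv0 : v 0 = b + 1 := by have := hbound 0; omega
      refine Or.inr ⟨vecTail v, ⟨hanti.comp_strictMono Fin.strictMono_succ, fun j => ?_, ?_⟩, ?_⟩
      · have := hanti (Fin.succ_pos j)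
        exact ⟨(hbound _).1, by simp only [vecTail, Function.comp]; omega⟩
      · rw [← cons_head_tail v, altSum_vecCons] at hsum
        simp only [vecHead] at hsum
        omega
      · rw [← hv0]
        exact cons_head_tail v
  · rintro (⟨hanti, hbound, hsum⟩ | ⟨w, ⟨hanti, hbound, hsum⟩, rfl⟩)
    · exact ⟨hanti, fun j => ⟨(hbound j).1, (hbound j).2.trans (by omega)⟩, hsum⟩
    · refine ⟨strictAnti_vecCons_of_lt hanti fun j => by have := hbound j; omega,
        fun j => ?_, by rw [altSum_vecCons]; omega⟩
      cases j using Fin.cases with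
      | zero => exact ⟨hab, le_rfl⟩
      | succ j => simp only [cons_val_succ]; have := hbound j; omega

lemma ncard_succ_upper (d : ℕ) {a b : ℤ} (hab : a ≤ b + 1) (l : ℤ) :
    (AltTuples (d + 1) a (b + 1) l).ncard =
      (AltTuples (d + 1) a b l).ncard + (AltTuples d a b (b + 1 - l)).ncard := by
  have hdisj : Disjoint (AltTuples (d + 1) a b l) (vecCons (b + 1) '' AltTuples d a b (b + 1 - l)) :=
    Set.disjoint_left.mpr fun v hv ⟨w, _, hw⟩ => by
      have := (hv.2.1 0).2
      rw [← hw, cons_val_zero] at this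
      omega
  rw [succ_upper_eq_union d hab, Set.ncard_union_eq hdisj (finite ..) ((finite ..).image _),
    Set.ncard_image_of_injective _ fun _ _ h => (vecCons_inj.mp h).2]

end AltTuples

def aqClosedForm (N : ℤ) (d : ℕ) (l : ℤ) : ℤ :=
  if Even d then intChoose (l - 1) ((d - 1) / 2) * intChoose (N - l) (d / 2)
  else intChoose l ((d - 1) / 2) * intChoose (N - l - 1) (d / 2)

lemma aqClosedForm_zero_left (d : ℕ) (l : ℤ) : aqClosedForm 0 d l = 0 := by
  unfold aqClosedForm
  split_ifs
  · rcases lt_or_ge (l - 1) 0 with h | h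
    · rw [intChoose_of_neg h, zero_mul]
    · rw [intChoose_of_neg (by omega : 0 - l < 0), mul_zero]
  · rcases lt_or_ge l 0 with h | h
    · rw [intChoose_of_neg h, zero_mul]
    · rw [intChoose_of_neg (by omega : 0 - l - 1 < 0), mul_zero]

lemma aqClosedForm_succ_left_one {N : ℤ} (hN : 0 ≤ N) (l : ℤ) :
    aqClosedForm (N + 1) 1 l = aqClosedForm N 1 l + if N - l = 0 then 1 else 0 := by
  simp only [aqClosedForm, Nat.not_even_one, if_false, intChoose]
  split_ifs <;> simp <;> omega

lemma aqClosedForm_succ_left_succ {d : ℕ} (hd : 1 ≤ d) (N l : ℤ) :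
    aqClosedForm (N + 1) (d + 1) l = aqClosedForm N (d + 1) l + aqClosedForm N d (N - l) := by
  unfold aqClosedForm
  obtain ⟨m, rfl | rfl⟩ := Nat.even_or_odd' d
  · obtain ⟨k, rfl⟩ : ∃ k, m = k + 1 := ⟨m - 1, by omega⟩
    have hodd : ¬Even (2 * (k + 1) + 1) := by simp [parity_simps]
    simp only [hodd, even_two_mul, if_true, if_false]
    rw [show (2 * (k + 1) + 1 - 1) / 2 = k + 1 by omega, show (2 * (k + 1) + 1) / 2 = k + 1 by omega,
      show (2 * (k + 1) - 1) / 2 = k by omega, show 2 * (k + 1) / 2 = k + 1 by omega,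
      show N + 1 - l - 1 = (N - l - 1) + 1 by ring, show N - (N - l) = l by ring,
      intChoose_succ_succ]
    ring
  · have heven : Even (2 * m + 1 + 1) := by simp [parity_simps]
    have hodd : ¬Even (2 * m + 1) := by simp [parity_simps]
    simp only [heven, hodd, if_true, if_false]
    rw [show (2 * m + 1 + 1 - 1) / 2 = m by omega, show (2 * m + 1 + 1) / 2 = m + 1 by omega,
      show (2 * m + 1 - 1) / 2 = m by omega, show (2 * m + 1) / 2 = m by omega,
      show N + 1 - l = (N - l) + 1 by ring, show N - (N - l) - 1 = l - 1 by ring,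
      intChoose_succ_succ]
    ring

theorem ncard_altTuples (N : ℕ) {d : ℕ} (hd : 1 ≤ d) (l : ℤ) :
    ((AltTuples d 0 (N - 1) l).ncard : ℤ) = aqClosedForm N d l := by
  induction N generalizing d l with
  | zero =>
    rw [AltTuples.eq_empty_of_lt hd (by norm_num) l, Set.ncard_empty, Nat.cast_zero,
      aqClosedForm_zero_left]
  | succ N ih =>
    obtain ⟨d, rfl⟩ : ∃ k, d = k + 1 := ⟨d - 1, by omega⟩
    rw [show ((N + 1 : ℕ) : ℤ) - 1 = (N - 1) + 1 by push_cast; ring,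
      AltTuples.ncard_succ_upper d (by omega), Nat.cast_add, ih (by omega),
      show (N : ℤ) - 1 + 1 = N by ring, Nat.cast_succ]
    rcases Nat.eq_zero_or_pos d with rfl | hd
    · rw [AltTuples.ncard_zero, aqClosedForm_succ_left_one (Nat.cast_nonneg N)]
      simp
    · rw [ih hd, aqClosedForm_succ_left_succ hd]

theorem stmt_0_general (N d : ℕ) (hd1 : 1 ≤ d) (l : ℤ) :
    (Nat.card {v : Fin d → ℤ // StrictAnti v ∧
        (∀ j, 0 ≤ v j ∧ v j ≤ (N : ℤ) - 1) ∧
        ∑ j : Fin d, (-1 : ℤ) ^ (j : ℕ) * v j = l} : ℤ) =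
      if Even d then
        intChoose (l - 1) ((d - 1) / 2) * intChoose ((N : ℤ) - l) (d / 2)
      else
        intChoose l ((d - 1) / 2) * intChoose ((N : ℤ) - l - 1) (d / 2) :=
  ncard_altTuples N hd1 l

theorem stmt_0 (N d : ℕ) (hN : 2 ≤ N) (hd1 : 1 ≤ d) (hdN : d ≤ N)
    (l : ℤ) (hl0 : 0 ≤ l) (hlN : l ≤ (N : ℤ) - 1) :
    (Nat.card {v : Fin d → ℤ // StrictAnti v ∧
        (∀ j, 0 ≤ v j ∧ v j ≤ (N : ℤ) - 1) ∧
        ∑ j : Fin d, (-1 : ℤ) ^ (j : ℕ) * v j = l} : ℤ) =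
      if Even d then
        intChoose (l - 1) ((d - 1) / 2) * intChoose ((N : ℤ) - l) (d / 2)
      else
        intChoose l ((d - 1) / 2) * intChoose ((N : ℤ) - l - 1) (d / 2) :=
  stmt_0_general N d hd1 l
end

section
/- For all integers N ≥ 1, d ≥ 1, and l, the number of tuples (l_1,...,l_d) with N ≥ l_1 > ... > l_d ≥ 1 and alternating sum equal to l is C(l-1, ⌊(d-1)/2⌋)·C(N-l, ⌊d/2⌋). -/
open Finset

def altTail {d : ℕ} (v : Fin d → ℤ) (j : ℕ) : ℤ :=
  ∑ i : Fin d with j ≤ i.val, (-1) ^ (i.val - j) * v i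

section altTail

variable {d : ℕ} (v : Fin d → ℤ)

theorem altTail_zero : altTail v 0 = ∑ i : Fin d, (-1) ^ (i : ℕ) * v i := by
  simp [altTail]

theorem altTail_of_le {j : ℕ} (hj : d ≤ j) : altTail v j = 0 :=
  sum_eq_zero fun i hi => by
    have := i.isLt
    simp only [mem_filter, mem_univ, true_and] at hi
    omega

theorem altTail_add_altTail_succ (i : Fin d) : altTail v i + altTail v (i + 1) = v i := by
  rw [altTail, altTail, sum_filter, sum_filter, ← sum_add_distrib, Fintype.sum_eq_single i]
  · simp
  · intro k hk
    have hk' : (k : ℕ) ≠ i := Fin.val_ne_of_ne hk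
    split_ifs <;> try omega
    · obtain ⟨m, hm⟩ : ∃ m, (k : ℕ) - i = m + 1 := ⟨k - i - 1, by omega⟩
      rw [hm, show (k : ℕ) - (i + 1) = m by omega, pow_succ]
      ring

end altTail

theorem eq_of_add_succ_eq {d : ℕ} {S T : ℕ → ℤ} (hS : ∀ i, d ≤ i → S i = 0)
    (hT : ∀ i, d ≤ i → T i = 0) (h : ∀ i < d, S i + S (i + 1) = T i + T (i + 1)) : S = T := by
  funext i
  induction hi : d - i generalizing i with
  | zero => rw [hS i (by omega), hT i (by omega)]
  | succ m ih =>
    have := h i (by omega)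
    have := ih (i + 1) (by omega)
    omega

def altTailEquiv (d : ℕ) : (Fin d → ℤ) ≃ {T : ℕ → ℤ // ∀ i, d ≤ i → T i = 0} where
  toFun v := ⟨altTail v, fun _ => altTail_of_le v⟩
  invFun T i := T.1 i + T.1 (i + 1)
  left_inv v := funext (altTail_add_altTail_succ v)
  right_inv T := Subtype.ext <| eq_of_add_succ_eq (fun _ => altTail_of_le _) T.2
    fun i hi => altTail_add_altTail_succ _ ⟨i, hi⟩

theorem strictAnti_and_pos_iff {d : ℕ} {v : Fin d → ℤ} {f : ℕ → ℤ} (hv : ∀ i : Fin d, f i = v i)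
    (hfd : f d = 0) : StrictAnti v ∧ (∀ i, 0 < v i) ↔ ∀ i < d, f (i + 1) < f i := by
  constructor
  · rintro ⟨hanti, hpos⟩ i hi
    rw [show f i = v ⟨i, hi⟩ from hv ⟨i, hi⟩]
    rcases (show i + 1 < d ∨ i + 1 = d by omega) with hlt | heq
    · rw [show f (i + 1) = v ⟨i + 1, hlt⟩ from hv ⟨i + 1, hlt⟩]
      exact hanti (Fin.mk_lt_mk.2 (Nat.lt_succ_self i))
    · rw [heq, hfd]
      exact hpos _
  · intro h
    have hf : StrictAntiOn f (Set.Iic d) := strictAntiOn_Iic_of_succ_lt (by simpa using h)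
    refine ⟨fun i j hij => ?_, fun i => ?_⟩
    · rw [← hv, ← hv]
      exact hf (by simp [i.isLt.le]) (by simp [j.isLt.le]) hij
    · rw [← hv, ← hfd]
      exact hf (by simp [i.isLt.le]) (by simp) i.isLt

theorem strictAnti_bounded_altSum_iff {d : ℕ} (hd : 1 ≤ d) (v : Fin d → ℤ) (N l : ℤ) :
    StrictAnti v ∧ (∀ j, 1 ≤ v j ∧ v j ≤ N) ∧ ∑ j : Fin d, (-1) ^ (j : ℕ) * v j = l ↔
      (∀ i < d, altTail v (i + 2) < altTail v i) ∧ altTail v 0 = l ∧ altTail v 1 ≤ N - l := by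
  have hchain : StrictAnti v ∧ (∀ j, 1 ≤ v j) ↔ ∀ i < d, altTail v (i + 2) < altTail v i := by
    simp only [Order.one_le_iff_pos]
    rw [strictAnti_and_pos_iff (f := fun i => altTail v i + altTail v (i + 1))
      (altTail_add_altTail_succ v) (by simp [altTail_of_le])]
    exact forall₂_congr fun i _ => ⟨fun h => by linarith, fun h => by linarith⟩
  have hv₀ := altTail_add_altTail_succ v ⟨0, hd⟩
  rw [← altTail_zero, forall_and]
  constructor
  · rintro ⟨hanti, ⟨hpos, hle⟩, hsum⟩
    exact ⟨hchain.1 ⟨hanti, hpos⟩, hsum, by linarith [hle ⟨0, hd⟩]⟩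
  · rintro ⟨hlt, hsum, hle⟩
    obtain ⟨hanti, hpos⟩ := hchain.2 hlt
    refine ⟨hanti, ⟨hpos, fun j => ?_⟩, hsum⟩
    calc v j ≤ v ⟨0, hd⟩ := hanti.antitone (Fin.mk_le_mk.2 (Nat.zero_le j))
      _ ≤ N := by linarith

def IsDecreasingChain (k : ℕ) (a : ℕ → ℤ) : Prop :=
  (∀ i, k ≤ i → a i = 0) ∧ ∀ i < k, a (i + 1) < a i

namespace IsDecreasingChain

variable {k : ℕ} {a : ℕ → ℤ}

theorem strictAntiOn (h : IsDecreasingChain k a) : StrictAntiOn a (Set.Iic k) :=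
  strictAntiOn_Iic_of_succ_lt (by simpa using h.2)

theorem pos (h : IsDecreasingChain k a) {i : ℕ} (hi : i < k) : 0 < a i :=
  h.1 k le_rfl ▸ h.strictAntiOn (by simp [hi.le]) (by simp) hi

theorem le_apply_zero (h : IsDecreasingChain k a) {i : ℕ} (hi : i ≤ k) : a i ≤ a 0 :=
  h.strictAntiOn.antitoneOn (by simp) (by simp [hi]) (Nat.zero_le i)

end IsDecreasingChain

noncomputable def isDecreasingChainOrderEmbEquiv (k : ℕ) {M : ℤ} (hM : 0 ≤ M) :
    {a // IsDecreasingChain k a ∧ a 0 ≤ M} ≃ (Fin k ↪o (Set.Icc 1 M)ᵒᵈ) where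
  toFun a := OrderEmbedding.ofStrictMono
    (fun i => OrderDual.toDual
      ⟨a.1 i, a.2.1.pos i.isLt, (a.2.1.le_apply_zero i.isLt.le).trans a.2.2⟩)
    fun i j hij => a.2.1.strictAntiOn (by simp) (by simp) hij
  invFun g := ⟨fun i => if h : i < k then (OrderDual.ofDual (g ⟨i, h⟩)).1 else 0, by
    refine ⟨⟨fun i hi => dif_neg (by omega), fun i hi => ?_⟩, ?_⟩ <;> dsimp only
    · rw [dif_pos hi]
      split_ifs with h
      · exact g.strictMono (Fin.mk_lt_mk.2 (Nat.lt_succ_self i))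
      · exact lt_of_lt_of_le one_pos (g ⟨i, hi⟩).2.1
    · split_ifs with h
      · exact (g ⟨0, h⟩).2.2
      · exact hM⟩
  left_inv a := by
    ext i
    by_cases h : i < k
    · exact dif_pos h
    · simp [h, a.2.1.1 i (by omega)]
  right_inv g := by
    ext i
    simp

theorem card_isDecreasingChain_le (k : ℕ) (M : ℤ) :
    Nat.card {a // IsDecreasingChain k a ∧ a 0 ≤ M} = intChoose M k := by
  rcases lt_or_ge M 0 with hM | hM
  · have : IsEmpty {a // IsDecreasingChain k a ∧ a 0 ≤ M} :=
      ⟨fun ⟨a, ha, haM⟩ => by linarith [ha.le_apply_zero le_rfl, ha.1 k le_rfl]⟩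
    simp [intChoose, hM]
  · rw [Nat.card_congr
      ((isDecreasingChainOrderEmbEquiv k hM).trans Set.powersetCard.ofFinEmbEquiv),
      Set.powersetCard.card]
    simp [intChoose, hM]

def isDecreasingChainSuccEquiv (k : ℕ) (c : ℤ) :
    {a // IsDecreasingChain (k + 1) a ∧ a 0 = c} ≃ {b // IsDecreasingChain k b ∧ b 0 ≤ c - 1} where
  toFun a := ⟨fun i => a.1 (i + 1),
    ⟨fun i hi => a.2.1.1 _ (by omega), fun i hi => a.2.1.2 _ (by omega)⟩,
    by linarith [a.2.1.2 0 k.succ_pos, a.2.2]⟩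
  invFun b := ⟨fun | 0 => c | i + 1 => b.1 i, by
    refine ⟨⟨fun i hi => ?_, fun i hi => ?_⟩, rfl⟩
    · obtain ⟨i, rfl⟩ := Nat.exists_eq_succ_of_ne_zero (by omega : i ≠ 0)
      exact b.2.1.1 i (by omega)
    · rcases i with _ | i
      · linarith [b.2.2]
      · exact b.2.1.2 i (by omega)⟩
  left_inv a := by
    ext (_ | i)
    · exact a.2.2.symm
    · rfl
  right_inv b := rfl

theorem card_isDecreasingChain_succ_eq (k : ℕ) (c : ℤ) :
    Nat.card {a // IsDecreasingChain (k + 1) a ∧ a 0 = c} = intChoose (c - 1) k := by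
  rw [Nat.card_congr (isDecreasingChainSuccEquiv k c), card_isDecreasingChain_le]

theorem isDecreasingChain_even_odd_iff {d : ℕ} {T : ℕ → ℤ} :
    (∀ i, d ≤ i → T i = 0) ∧ (∀ i < d, T (i + 2) < T i) ↔
      IsDecreasingChain ((d + 1) / 2) (fun i => T (2 * i)) ∧
        IsDecreasingChain (d / 2) (fun i => T (2 * i + 1)) := by
  constructor
  · rintro ⟨hsupp, hlt⟩
    exact ⟨⟨fun i hi => hsupp _ (by omega), fun i hi => hlt (2 * i) (by omega)⟩,
      ⟨fun i hi => hsupp _ (by omega), fun i hi => hlt (2 * i + 1) (by omega)⟩⟩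
  · rintro ⟨⟨hsupp₀, hlt₀⟩, ⟨hsupp₁, hlt₁⟩⟩
    constructor
    · intro i hi
      obtain ⟨j, rfl | rfl⟩ := Nat.even_or_odd' i
      · exact hsupp₀ j (by omega)
      · exact hsupp₁ j (by omega)
    · intro i hi
      obtain ⟨j, rfl | rfl⟩ := Nat.even_or_odd' i
      · exact hlt₀ j (by omega)
      · exact hlt₁ j (by omega)

def evenOddEquiv (α : Type*) : (ℕ → α) ≃ (ℕ → α) × (ℕ → α) :=
  (Equiv.arrowCongr Equiv.natSumNatEquivNat.symm (Equiv.refl α)).trans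
    (Equiv.sumArrowEquivProdArrow ℕ ℕ α)

theorem evenOddEquiv_apply {α : Type*} (T : ℕ → α) :
    evenOddEquiv α T = (fun i => T (2 * i), fun i => T (2 * i + 1)) :=
  rfl

noncomputable def alternatingTuplesEquiv {d : ℕ} (hd : 1 ≤ d) (N l : ℤ) :
    {v : Fin d → ℤ // StrictAnti v ∧ (∀ j, 1 ≤ v j ∧ v j ≤ N) ∧
        ∑ j : Fin d, (-1) ^ (j : ℕ) * v j = l} ≃
      {a // IsDecreasingChain ((d + 1) / 2) a ∧ a 0 = l} ×
        {b // IsDecreasingChain (d / 2) b ∧ b 0 ≤ N - l} :=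
  let Q (T : ℕ → ℤ) : Prop := (∀ i < d, T (i + 2) < T i) ∧ T 0 = l ∧ T 1 ≤ N - l
  (Equiv.subtypeEquiv (q := fun T => Q T.1) (altTailEquiv d)
      (strictAnti_bounded_altSum_iff hd · N l)).trans <|
    (Equiv.subtypeSubtypeEquivSubtypeInter (fun T => ∀ i, d ≤ i → T i = 0) Q).trans <|
    (Equiv.subtypeEquiv (evenOddEquiv ℤ) fun T => by
      rw [evenOddEquiv_apply, ← and_assoc, isDecreasingChain_even_odd_iff, and_and_and_comm]).trans
    Equiv.subtypeProdEquivProd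

theorem stmt_2_general (N d : ℕ) (hd : 1 ≤ d) (l : ℤ) :
    (Nat.card {v : Fin d → ℤ // StrictAnti v ∧
        (∀ j, 1 ≤ v j ∧ v j ≤ (N : ℤ)) ∧
        ∑ j : Fin d, (-1 : ℤ) ^ (j : ℕ) * v j = l} : ℤ) =
      intChoose (l - 1) ((d - 1) / 2) * intChoose ((N : ℤ) - l) (d / 2) := by
  rw [Nat.card_congr (alternatingTuplesEquiv hd N l), Nat.card_prod, Nat.cast_mul,
    show (d + 1) / 2 = (d - 1) / 2 + 1 by omega, card_isDecreasingChain_succ_eq,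
    card_isDecreasingChain_le]

theorem stmt_2 (N d : ℕ) (hN : 1 ≤ N) (hd : 1 ≤ d) (l : ℤ) :
    (Nat.card {v : Fin d → ℤ // StrictAnti v ∧
        (∀ j, 1 ≤ v j ∧ v j ≤ (N : ℤ)) ∧
        ∑ j : Fin d, (-1 : ℤ) ^ (j : ℕ) * v j = l} : ℤ) =
      intChoose (l - 1) ((d - 1) / 2) * intChoose ((N : ℤ) - l) (d / 2) :=
  stmt_2_general N d hd l
end

section
/- Let d be even, d = 2m with m ≥ 1. Let λ ∈ [0,1] and let (l_N) be a sequence of positive integers with l_N < N and l_N/N → λ as N → ∞. Then (d!/N^{d-1})·C(l_N - 1, m-1)·C(N - l_N, m) converges to (1/B(m, m+1))·λ^{m-1}(1-λ)^m, where B is the Euler beta function. -/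
/-!
Writing `C(n, k) = n (n - 1) ⋯ (n - k + 1) / k!`, each of the `k` factors divided by `N` tends to
`α` whenever `n_N / N → α`, so `C(n_N, k) / N ^ k → α ^ k / k!`. Apply this to `n_N = l_N - 1`
(with `α = λ`, `k = m - 1`) and to `n_N = N - l_N` (with `α = 1 - λ`, `k = m`), and use
`N ^ (2m - 1) = N ^ (m - 1) · N ^ m`.
-/

open Filter Topology Finset

lemma Nat.cast_choose_eq_prod_range_sub_div {K : Type*} [Field K] [CharZero K] (n k : ℕ) :
    (n.choose k : K) = (∏ i ∈ range k, ((n : K) - i)) / k.factorial := by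
  rw [← descPochhammer_eval_eq_prod_range, descPochhammer_eval_eq_descFactorial,
    Nat.descFactorial_eq_factorial_mul_choose, Nat.cast_mul, mul_div_cancel_left₀]
  exact_mod_cast k.factorial_ne_zero

lemma tendsto_natCast_sub_div {a b : ℕ → ℕ} {α β : ℝ}
    (ha : Tendsto (fun N : ℕ => (a N : ℝ) / N) atTop (𝓝 α))
    (hb : Tendsto (fun N : ℕ => (b N : ℝ) / N) atTop (𝓝 β))
    (hba : ∀ᶠ N in atTop, b N ≤ a N) :
    Tendsto (fun N : ℕ => ((a N - b N : ℕ) : ℝ) / N) atTop (𝓝 (α - β)) := by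
  refine (ha.sub hb).congr' ?_
  filter_upwards [hba] with N hN
  rw [Nat.cast_sub hN, sub_div]

/-- Unlike `isEquivalent_choose`, this allows `n_N` to stay bounded (the case `α = 0`). -/
lemma tendsto_choose_div_pow {n : ℕ → ℕ} {α : ℝ}
    (hn : Tendsto (fun N : ℕ => (n N : ℝ) / N) atTop (𝓝 α)) (k : ℕ) :
    Tendsto (fun N : ℕ => ((n N).choose k : ℝ) / (N : ℝ) ^ k) atTop
      (𝓝 (α ^ k / k.factorial)) := by
  have hfactor (i : ℕ) : Tendsto (fun N : ℕ => ((n N : ℝ) - i) / N) atTop (𝓝 α) := by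
    simpa [sub_div] using hn.sub (tendsto_const_div_atTop_nhds_zero_nat (i : ℝ))
  have hprod := (tendsto_finsetProd (range k) fun i _ => hfactor i).div_const
    (k.factorial : ℝ)
  simp only [prod_const, card_range, prod_div_distrib] at hprod
  refine hprod.congr fun N => ?_
  rw [Nat.cast_choose_eq_prod_range_sub_div, div_div, div_div, mul_comm]

theorem stmt_3_general (m : ℕ) (lam : ℝ)
    (l : ℕ → ℕ) (hl : ∀ N, 2 ≤ N → 0 < l N ∧ l N < N)
    (hlim : Tendsto (fun N : ℕ => (l N : ℝ) / N) atTop (𝓝 lam)) :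
    Tendsto
      (fun N : ℕ =>
        ((2 * m).factorial : ℝ) / (N : ℝ) ^ (2 * m - 1) *
          ((l N - 1).choose (m - 1) : ℝ) * ((N - l N).choose m : ℝ))
      atTop
      (𝓝 (((2 * m).factorial : ℝ) / ((m - 1).factorial * m.factorial) *
        lam ^ (m - 1) * (1 - lam) ^ m)) := by
  have hl_eventually := eventually_atTop.mpr ⟨2, hl⟩
  have hleft : Tendsto (fun N : ℕ => ((l N - 1 : ℕ) : ℝ) / N) atTop (𝓝 lam) := by
    simpa using tendsto_natCast_sub_div (b := fun _ => 1) (β := 0) hlim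
      (tendsto_const_div_atTop_nhds_zero_nat ((1 : ℕ) : ℝ))
      (hl_eventually.mono fun N hN => hN.1)
  have hself : Tendsto (fun N : ℕ => (N : ℝ) / N) atTop (𝓝 1) :=
    tendsto_const_nhds.congr' <| (eventually_ne_atTop 0).mono fun N hN =>
      (div_self (Nat.cast_ne_zero.mpr hN)).symm
  have hright : Tendsto (fun N : ℕ => ((N - l N : ℕ) : ℝ) / N) atTop (𝓝 (1 - lam)) :=
    tendsto_natCast_sub_div hself hlim (hl_eventually.mono fun N hN => hN.2.le)
  have hpow (N : ℝ) : N ^ (2 * m - 1) = N ^ (m - 1) * N ^ m := by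
    rw [← pow_add]; congr 1; omega
  convert ((tendsto_choose_div_pow hleft (m - 1)).mul
    (tendsto_choose_div_pow hright m)).const_mul ((2 * m).factorial : ℝ) using 1
  · ext N
    rw [hpow]
    ring
  · congr 1
    ring

theorem stmt_3 (m : ℕ) (hm : 1 ≤ m) (lam : ℝ) (hlam : lam ∈ Set.Icc (0:ℝ) 1)
    (l : ℕ → ℕ) (hl : ∀ N, 2 ≤ N → 0 < l N ∧ l N < N)
    (hlim : Tendsto (fun N : ℕ => (l N : ℝ) / N) atTop (𝓝 lam)) :
    Tendsto
      (fun N : ℕ =>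
        ((2 * m).factorial : ℝ) / (N : ℝ) ^ (2 * m - 1) *
          ((l N - 1).choose (m - 1) : ℝ) * ((N - l N).choose m : ℝ))
      atTop
      (𝓝 (((2 * m).factorial : ℝ) / ((m - 1).factorial * m.factorial) *
        lam ^ (m - 1) * (1 - lam) ^ m)) :=
  stmt_3_general m lam l hl hlim
end

section
/- For N ≥ 1, u ∈ ℝ, and n ∈ {0,...,N-1}, the ordered product Π_{k=N-1}^{0}(I + (u/N)·E_δ(-2k,n)·J) equals I + Σ_{d=1}^{N} (u/N)^d · Σ_{l=0}^{N-1} AQ_N(l,d)·E_δ(-2l,n)·J^d, where AQ_N(l,d) counts strictly decreasing d-tuples in {0,...,N-1} with alternating sum l. -/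
open Complex Matrix

/-- `Ediscr N x n = diag(e^{iπxn/N}, e^{-iπxn/N})`. -/
noncomputable def Ediscr (N : ℕ) (x : ℝ) (n : ℕ) : Matrix (Fin 2) (Fin 2) ℂ :=
  !![Complex.exp (Real.pi * Complex.I * x * n / N), 0;
     0, Complex.exp (-(Real.pi * Complex.I * x * n / N))]

def Jmat : Matrix (Fin 2) (Fin 2) ℂ := !![0, 1; -1, 0]

/-- `AQ N l d` is the number of strictly decreasing `d`-tuples in `{0, …, N-1}`
with alternating sum `l`. -/
noncomputable def AQ (N : ℕ) (l : ℤ) (d : ℕ) : ℕ :=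
  Nat.card {v : Fin d → ℤ // StrictAnti v ∧
    (∀ j, 0 ≤ v j ∧ v j ≤ (N : ℤ) - 1) ∧
    ∑ j : Fin d, (-1 : ℤ) ^ (j : ℕ) * v j = l}

/-!
Expanding the ordered product gives one term `c ^ |S| • ∏_{k ∈ S} E(-2k) J` for every subsequence
`S` of `N-1, …, 1, 0`, i.e. for every strictly decreasing tuple. Since `J E(x) = E(-x) J`, moving
all factors `J` to the right flips the sign of every second exponent, so the term is
`c ^ |S| • E(-2 a) J ^ |S|` with `a` the alternating sum of `S`. Grouping the subsequences by length
`d` and alternating sum `l` produces exactly `AQ N l d` copies of each term.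
-/

theorem List.prod_map_one_add_smul {ι R A : Type*} [CommSemiring R] [Semiring A] [Algebra R A]
    (c : R) (f : ι → A) (L : List ι) :
    (L.map fun k => 1 + c • f k).prod =
      (L.sublists.map fun S => c ^ S.length • (S.map f).prod).sum := by
  induction L with
  | nil => simp
  | cons a t ih =>
    rw [((List.sublists_cons_perm_append a t).map _).sum_eq, List.map_append, List.sum_append,
      List.map_cons, List.prod_cons, ih, add_mul, one_mul, ← List.sum_map_mul_left, List.map_map]
    congr 1
    refine congrArg _ (List.map_congr_left fun S _ => ?_)
    simp only [Function.comp_apply, List.length_cons, List.map_cons, List.prod_cons, pow_succ',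
      smul_mul_smul_comm]

theorem map_list_alternatingSum {F G H : Type*} [AddCommGroup G] [AddCommGroup H] [FunLike F G H]
    [AddMonoidHomClass F G H] (f : F) (L : List G) :
    f L.alternatingSum = (L.map f).alternatingSum := by
  induction L with
  | nil => simp
  | cons a t ih => simp [List.alternatingSum_cons, ih]

theorem List.alternatingSum_ofFn {G : Type*} [AddCommGroup G] {d : ℕ} (v : Fin d → G) :
    (List.ofFn v).alternatingSum = ∑ j : Fin d, (-1 : ℤ) ^ (j : ℕ) • v j := by
  rw [List.alternatingSum_eq_finsetSum]
  exact Fintype.sum_equiv (finCongr List.length_ofFn) _ _ fun _ => by simp [Fin.cast]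

theorem List.alternatingSum_mem_Icc {G : Type*} [AddCommGroup G] [LinearOrder G]
    [IsOrderedAddMonoid G] {S : List G} (hS : S.SortedGE) {m : G} (hm : 0 ≤ m)
    (h : ∀ x ∈ S, x ∈ Set.Icc 0 m) :
    S.alternatingSum ∈ Set.Icc 0 m := by
  induction S generalizing m with
  | nil => simpa
  | cons a t ih =>
    obtain ⟨hat, ht⟩ := List.pairwise_cons.mp hS.pairwise
    obtain ⟨ha0, ham⟩ := h a List.mem_cons_self
    obtain ⟨h0, h1⟩ :=
      ih ht.sortedGE ha0 fun x hx => ⟨(h x (List.mem_cons_of_mem _ hx)).1, hat x hx⟩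
    rw [List.alternatingSum_cons]
    exact ⟨sub_nonneg.mpr h1, (sub_le_self a h0).trans ham⟩

theorem Nat.card_subtype_ofFn {α : Type*} (d : ℕ) (p : List α → Prop) :
    Nat.card {v : Fin d → α // p (List.ofFn v)} = Nat.card {S : List α // S.length = d ∧ p S} :=
  Nat.card_congr <|
    ((Equiv.vectorEquivFin α d).symm.subtypeEquiv fun v =>
      iff_of_eq (congrArg p (List.Vector.toList_ofFn v).symm) :
      {v : Fin d → α // p (List.ofFn v)} ≃ {w : List.Vector α d // p w.1}).trans
    (Equiv.subtypeSubtypeEquivSubtypeInter _ p)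

theorem Ediscr_zero (N n : ℕ) : Ediscr N 0 n = 1 := by
  ext i j
  fin_cases i <;> fin_cases j <;> simp [Ediscr]

theorem Ediscr_add (N n : ℕ) (x y : ℝ) :
    Ediscr N (x + y) n = Ediscr N x n * Ediscr N y n := by
  ext i j
  fin_cases i <;> fin_cases j <;>
    simp [Ediscr, Matrix.mul_apply, ← Complex.exp_add] <;> ring_nf

theorem Jmat_mul_Ediscr (N n : ℕ) (x : ℝ) :
    Jmat * Ediscr N x n = Ediscr N (-x) n * Jmat := by
  ext i j
  fin_cases i <;> fin_cases j <;> simp [Ediscr, Jmat, Matrix.mul_apply, neg_div]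

theorem prod_map_Ediscr_mul_Jmat (N n : ℕ) (S : List ℝ) :
    (S.map fun k => Ediscr N (-(2 * k)) n * Jmat).prod =
      Ediscr N (-(2 * S.alternatingSum)) n * Jmat ^ S.length := by
  induction S with
  | nil => simp [Ediscr_zero]
  | cons a t ih =>
    rw [List.map_cons, List.prod_cons, ih, List.alternatingSum_cons, List.length_cons, pow_succ',
      mul_assoc, ← mul_assoc Jmat, Jmat_mul_Ediscr, mul_assoc, ← mul_assoc, ← Ediscr_add]
    congr 2
    ring

def descRange (N : ℕ) : List ℤ := (List.range N).reverse.map Nat.cast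

open List in
theorem sublist_descRange_iff {N : ℕ} {S : List ℤ} :
    S <+ descRange N ↔ S.SortedGT ∧ ∀ x ∈ S, 0 ≤ x ∧ x < N := by
  have hR : (descRange N).SortedGT := by
    rw [descRange, Nat.strictMono_cast.sortedGT_listMap, List.sortedGT_reverse]
    exact List.sortedLT_range N
  have hmem : ∀ x : ℤ, x ∈ descRange N ↔ 0 ≤ x ∧ x < N := by
    intro x
    simp only [descRange, List.mem_map, List.mem_reverse, List.mem_range]
    constructor
    · rintro ⟨a, ha, rfl⟩
      omega
    · rintro ⟨h0, hxN⟩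
      exact ⟨x.toNat, by omega, by omega⟩
  constructor
  · intro h
    exact ⟨(hR.pairwise.sublist h).sortedGT, fun x hx => (hmem x).1 (h.subset hx)⟩
  · rintro ⟨hS, hx⟩
    exact List.sublist_of_subperm_of_sortedGE
      (hS.nodup.subperm fun x h => (hmem x).2 (hx x h)) hS.sortedGE hR.sortedGE

open Finset in
theorem AQ_eq_card_sublists (N : ℕ) (l : ℤ) (d : ℕ) :
    AQ N l d = #{S ∈ (descRange N).sublists.toFinset | S.length = d ∧ S.alternatingSum = l} := by
  let p : List ℤ → Prop := fun S => S.SortedGT ∧ (∀ x ∈ S, 0 ≤ x ∧ x < N) ∧ S.alternatingSum = l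
  have hAQ : AQ N l d = Nat.card {v : Fin d → ℤ // p (List.ofFn v)} := by
    refine Nat.card_congr (Equiv.subtypeEquivRight fun v => ?_)
    simp only [p, List.sortedGT_ofFn_iff, List.forall_mem_ofFn_iff, List.alternatingSum_ofFn,
      smul_eq_mul, Int.lt_iff_add_one_le, ← le_sub_iff_add_le]
  rw [hAQ, Nat.card_subtype_ofFn, ← Nat.card_eq_finsetCard]
  refine Nat.card_congr (Equiv.subtypeEquivRight fun S => ?_)
  simp only [p, mem_filter, List.mem_toFinset, List.mem_sublists, sublist_descRange_iff]
  tauto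

theorem AQ_zero_right (N : ℕ) (l : ℤ) : AQ N l 0 = if l = 0 then 1 else 0 := by
  rcases eq_or_ne l 0 with rfl | hl
  · simp [AQ, Subsingleton.strictAnti]
  · simp [AQ, hl, hl.symm]

open Finset in
theorem sum_sublists_descRange_eq_sum_AQ {M : Type*} [AddCommMonoid M] {N : ℕ} (hN : 1 ≤ N)
    (F : ℕ → ℤ → M) :
    ((descRange N).sublists.map fun S => F S.length S.alternatingSum).sum =
      ∑ d ∈ range (N + 1), ∑ l ∈ range N, AQ N l d • F d l := by
  have hR : (descRange N).Nodup :=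
    (List.nodup_reverse.mpr List.nodup_range).map Nat.cast_injective
  have hmaps : ∀ S ∈ (descRange N).sublists.toFinset,
      (S.length, S.alternatingSum) ∈ range (N + 1) ×ˢ (range N).map Nat.castEmbedding := by
    intro S hS
    rw [List.mem_toFinset, List.mem_sublists] at hS
    obtain ⟨hsorted, hbound⟩ := sublist_descRange_iff.mp hS
    have hlen : S.length ≤ N := by simpa [descRange] using hS.length_le
    obtain ⟨h0, h1⟩ := List.alternatingSum_mem_Icc hsorted.sortedGE (m := (N : ℤ) - 1)
      (by omega) fun x hx => ⟨(hbound x hx).1, Int.le_sub_one_of_lt (hbound x hx).2⟩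
    simp only [mem_product, mem_range, mem_map, Nat.castEmbedding_apply]
    exact ⟨by omega, S.alternatingSum.toNat, by omega, by omega⟩
  rw [← List.sum_toFinset _ (List.nodup_sublists.mpr hR), ← sum_fiberwise_of_maps_to hmaps,
    sum_product]
  refine sum_congr rfl fun d _ => ?_
  rw [sum_map]
  refine sum_congr rfl fun l _ => ?_
  rw [AQ_eq_card_sublists, ← sum_const]
  refine sum_congr (filter_congr fun S _ => Prod.ext_iff) fun S hS => ?_
  obtain ⟨-, hd, hl⟩ := mem_filter.mp hS
  rw [hd, hl]

theorem stmt_16_general (N : ℕ) (hN : 1 ≤ N) (n : ℕ) (u : ℝ) :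
    ((List.range N).reverse.map
        (fun k => (1 : Matrix (Fin 2) (Fin 2) ℂ) +
          ((u / N : ℝ) : ℂ) • (Ediscr N (-(2 * k)) n * Jmat))).prod =
      1 + ∑ d ∈ Finset.Icc 1 N, ((u / N : ℝ) : ℂ) ^ d •
        ∑ l ∈ Finset.range N,
          (AQ N (l : ℤ) d : ℂ) • (Ediscr N (-(2 * l)) n * Jmat ^ d) := by
  set c : ℂ := ((u / N : ℝ) : ℂ)
  -- In the statement `k` runs over `(List.range N).reverse` coerced to `List ℝ` by the list monad.
  have hlist : (do let a ← (List.range N).reverse; pure (a : ℝ) : List ℝ) =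
      (descRange N).map (Int.cast : ℤ → ℝ) := by
    rw [descRange, List.map_map,
      show (Int.cast ∘ Nat.cast : ℕ → ℝ) = Nat.cast from funext Int.cast_natCast]
    exact List.map_eq_flatMap.symm
  rw [hlist, List.prod_map_one_add_smul, List.sublists_map, List.map_map]
  simp only [Function.comp_def, List.length_map, prod_map_Ediscr_mul_Jmat, ← Int.coe_castAddHom,
    ← map_list_alternatingSum]
  refine (sum_sublists_descRange_eq_sum_AQ hN fun d l =>
    c ^ d • (Ediscr N (-(2 * (l : ℝ))) n * Jmat ^ d)).trans ?_
  rw [Finset.range_eq_Ico, Finset.sum_eq_sum_Ico_succ_bot N.succ_pos, zero_add,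
    Nat.succ_eq_add_one, Finset.Ico_add_one_right_eq_Icc]
  congr 1
  · simp [AQ_zero_right, Ediscr_zero, Nat.one_le_iff_ne_zero.mp hN]
  · refine Finset.sum_congr rfl fun d _ => ?_
    rw [Finset.smul_sum]
    refine Finset.sum_congr rfl fun l _ => ?_
    rw [smul_comm, ← Nat.cast_smul_eq_nsmul ℂ, Int.cast_natCast]

theorem stmt_16 (N : ℕ) (hN : 1 ≤ N) (n : ℕ) (hn : n < N) (u : ℝ) :
    ((List.range N).reverse.map
        (fun k => (1 : Matrix (Fin 2) (Fin 2) ℂ) +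
          ((u / N : ℝ) : ℂ) • (Ediscr N (-(2 * k)) n * Jmat))).prod =
      1 + ∑ d ∈ Finset.Icc 1 N, ((u / N : ℝ) : ℂ) ^ d •
        ∑ l ∈ Finset.range N,
          (AQ N (l : ℤ) d : ℂ) • (Ediscr N (-(2 * l)) n * Jmat ^ d) :=
  stmt_16_general N hN n u
end
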